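/- arXiv:1011.3368 — 2 statements merged into one kernel-verified Lean document; each statement's English description precedes it below -/
import Mathlib

section
/- Let u be a complex number which is neither real nor purely imaginary (i.e. Re u ≠ 0 and Im u ≠ 0). Then the set of real numbers r for which e^{ru} and its complex conjugate conj(e^{ru}) are algebraically dependent over ℚ is countable. In particular, for all real r outside a countable set, e^{ru} and conj(e^{ru}) are algebraically independent over ℚ. -/
/-!
A nonzero `p ∈ ℚ[X, Y]` evaluated at `(e^{zu}, e^{z ū})` is the exponential polynomial
`∑ c_{a,b} e^{z (a u + b ū)}`. When `Re u ≠ 0` and `Im u ≠ 0` the numbers `u, ū` are linearly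
independent over `ℝ`, so the frequencies `a u + b ū` are pairwise distinct; by Dedekind's
independence of characters this entire function is not identically zero, hence has countably many
zeros. There are countably many `p`, so the set of `z ∈ ℂ` (and a fortiori of `r ∈ ℝ`) at which
`e^{zu}, e^{z ū}` are algebraically dependent is countable.
-/

open Complex MvPolynomial Function ComplexConjugate

theorem AnalyticOnNhd.countable_preimage_zero {𝕜 E : Type*} [NontriviallyNormedField 𝕜]
    [ConnectedSpace 𝕜] [SecondCountableTopology 𝕜] [NormedAddCommGroup E] [NormedSpace 𝕜 E]
    {f : 𝕜 → E} {x : 𝕜} (hf : AnalyticOnNhd 𝕜 f Set.univ) (hx : f x ≠ 0) :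
    (f ⁻¹' {0}).Countable := by
  have := isDiscrete_of_codiscreteWithin (s := f ⁻¹' {0}) (hf.preimage_zero_mem_codiscrete hx)
  simpa using (HereditarilyLindelofSpace.isLindelof _).countable_of_isDiscrete this

noncomputable def expMulChar (w : ℂ) : Multiplicative ℂ →* ℂ where
  toFun z := exp (z.toAdd * w)
  map_one' := by simp
  map_mul' a b := by simp [add_mul, exp_add]

-- If the two characters agree then `e^{z (w - w')} = 1` for all `z`, but `z = πi / (w - w')`
-- gives `-1`.
theorem expMulChar_injective : Injective expMulChar := by
  intro w w' h
  by_contra hne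
  have hsub : w - w' ≠ 0 := sub_ne_zero.mpr hne
  have heq := DFunLike.congr_fun h (.ofAdd (Real.pi * I / (w - w')))
  simp only [expMulChar, MonoidHom.coe_mk, OneHom.coe_mk, toAdd_ofAdd] at heq
  have : exp (Real.pi * I) = 1 := by
    rw [← div_mul_cancel₀ (Real.pi * I : ℂ) hsub, mul_sub, exp_sub, heq, div_self (exp_ne_zero _)]
  norm_num [exp_pi_mul_I] at this

theorem linearIndependent_exp_mul {ι : Type*} {w : ι → ℂ} (hw : Injective w) :
    LinearIndependent ℂ fun i (z : ℂ) => exp (z * w i) :=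
  (linearIndependent_monoidHom (Multiplicative ℂ) ℂ).comp _ (expMulChar_injective.comp hw)

theorem linearIndependent_pair_conj {u : ℂ} (hre : u.re ≠ 0) (him : u.im ≠ 0) :
    LinearIndependent ℝ ![u, conj u] := by
  refine LinearIndependent.pair_iff.mpr fun s t hst => ?_
  have hre' := congrArg re hst
  have him' := congrArg im hst
  simp only [add_re, add_im, smul_re, smul_im, conj_re, conj_im, zero_re, zero_im,
    smul_eq_mul, mul_neg] at hre' him'
  have hsum : s + t = 0 := (mul_eq_zero.mp (by linarith : (s + t) * u.re = 0)).resolve_right hre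
  have hdiff : s - t = 0 := (mul_eq_zero.mp (by linarith : (s - t) * u.im = 0)).resolve_right him
  constructor <;> linarith

section
variable {ι : Type*} (v : ι → ℂ)

theorem aeval_exp_mul (p : MvPolynomial ι ℚ) (z : ℂ) :
    aeval (fun i => exp (z * v i)) p =
      ∑ d ∈ p.support, algebraMap ℚ ℂ (p.coeff d) * exp (z * Finsupp.linearCombination ℕ v d) := by
  rw [aeval_def, eval₂_eq]
  refine Finset.sum_congr rfl fun d _ => ?_
  rw [Finsupp.linearCombination_apply, Finsupp.sum, Finset.mul_sum, exp_sum]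
  congr 1
  refine Finset.prod_congr rfl fun i _ => ?_
  rw [← exp_nat_mul, nsmul_eq_mul]
  ring_nf

theorem differentiable_aeval_exp_mul (p : MvPolynomial ι ℚ) :
    Differentiable ℂ fun z => aeval (fun i => exp (z * v i)) p := by
  simp_rw [aeval_exp_mul]
  fun_prop

variable {v}

theorem exists_aeval_exp_mul_ne_zero (hv : LinearIndependent ℕ v) {p : MvPolynomial ι ℚ}
    (hp : p ≠ 0) : ∃ z, aeval (fun i => exp (z * v i)) p ≠ 0 := by
  by_contra! h
  have hcomb : ∑ d ∈ p.support, algebraMap ℚ ℂ (p.coeff d) •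
      (fun z => exp (z * Finsupp.linearCombination ℕ v d)) = 0 :=
    funext fun z => by simpa [aeval_exp_mul] using h z
  obtain ⟨d, hd⟩ := support_nonempty.mpr hp
  have hcoeff := linearIndependent_iff'.mp (linearIndependent_exp_mul hv) p.support _ hcomb d hd
  exact mem_support_iff.mp hd (by simpa using hcoeff)

theorem countable_setOf_not_algebraicIndependent_exp_mul [Countable ι]
    (hv : LinearIndependent ℕ v) :
    {z : ℂ | ¬ AlgebraicIndependent ℚ fun i => exp (z * v i)}.Countable := by
  have : Countable (MvPolynomial ι ℚ) := AddMonoidAlgebra.coeffEquiv.injective.countable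
  have hsub : {z : ℂ | ¬ AlgebraicIndependent ℚ fun i => exp (z * v i)} ⊆
      ⋃ p : {p : MvPolynomial ι ℚ // p ≠ 0},
        (fun z => aeval (fun i => exp (z * v i)) p.1) ⁻¹' {0} := by
    intro z hz
    simp only [Set.mem_ofPred_eq, algebraicIndependent_iff, not_forall] at hz
    obtain ⟨p, hp0, hp⟩ := hz
    exact Set.mem_iUnion.mpr ⟨⟨p, hp⟩, hp0⟩
  refine (Set.countable_iUnion fun p => ?_).mono hsub
  obtain ⟨z, hz⟩ := exists_aeval_exp_mul_ne_zero hv p.2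
  exact AnalyticOnNhd.countable_preimage_zero
    (fun z _ => (differentiable_aeval_exp_mul v p.1).analyticAt z) hz

end

/-- If `u` is a complex number which is neither real nor purely imaginary, then the set of
real `r` for which `e^{ru}` and its complex conjugate are algebraically dependent over ℚ
is countable. -/
theorem countable_alg_dep_set (u : ℂ) (hre : u.re ≠ 0) (him : u.im ≠ 0) :
    Set.Countable {r : ℝ | ¬ AlgebraicIndependent ℚ
      ![Complex.exp ((r : ℂ) * u), (starRingEnd ℂ) (Complex.exp ((r : ℂ) * u))]} := by
  have hv : LinearIndependent ℕ ![u, conj u] :=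
    (linearIndependent_pair_conj hre him).restrict_scalars' ℕ
  refine ((countable_setOf_not_algebraicIndependent_exp_mul hv).preimage ofReal_injective).mono
    fun r hr => ?_
  have hfamily : ![exp (r * u), conj (exp (r * u))] = fun i => exp (r * ![u, conj u] i) := by
    ext i
    fin_cases i <;> simp [← exp_conj]
  simpa [hfamily] using hr
end

section
/- Let τ be a complex number with Im τ ≠ 0 and let Λ_τ = ℤ + ℤτ be the additive subgroup of ℂ generated by 1 and τ. Then Re τ is rational if and only if there exists an additive subgroup Λ of ℂ contained in Λ_τ which is stable under complex conjugation (conj(Λ) = Λ) and which contains two elements that are linearly independent over ℝ (equivalently, Λ is a sublattice of finite index in Λ_τ). -/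
/-!
If `Re τ = a / b`, then `b` and `b * τ - a` are a real and a purely imaginary element of
`Λ_τ`, so both lie in the largest conjugation-stable subgroup `Λ_τ ∩ conj⁻¹ Λ_τ`.
Conversely, two independent elements of a conjugation-stable `Λ ⊆ Λ_τ` cannot both be real,
and for a non-real `z = m + n τ ∈ Λ` (so `n ≠ 0`) the real number
`z + conj z = 2 m + 2 n Re τ` lies in `Λ_τ ∩ ℝ = ℤ`.
-/

open ComplexConjugate

theorem Set.image_inter_preimage_self_of_involutive {α : Type*} {f : α → α}
    (hf : Function.Involutive f) (s : Set α) : f '' (s ∩ f ⁻¹' s) = s ∩ f ⁻¹' s := by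
  rw [hf.image_eq_preimage_symm, Set.preimage_inter, ← Set.preimage_comp, hf.comp_self,
    Set.preimage_id, Set.inter_comm]

namespace Complex

theorem linearIndependent_pair_of_im_eq_zero_of_im_ne_zero {x y : ℂ} (hx : x.im = 0)
    (hx₀ : x ≠ 0) (hy : y.im ≠ 0) : LinearIndependent ℝ ![x, y] := by
  refine linearIndependent_fin2.mpr
    ⟨fun h ↦ hy (by simpa using congrArg im h), fun a hay ↦ hx₀ ?_⟩
  have ha : a = 0 := by simpa [hy, hx] using congrArg im hay
  simpa [ha] using hay.symm

theorem not_linearIndependent_pair_of_im_eq_zero {x y : ℂ} (hx : x.im = 0) (hy : y.im = 0) :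
    ¬ LinearIndependent ℝ ![x, y] := by
  rw [linearIndependent_fin2]
  rintro ⟨hy₀, hxy⟩
  have hre : y.re ≠ 0 := fun h ↦ hy₀ (Complex.ext h hy)
  exact hxy (x.re / y.re) (Complex.ext (by simp [hre]) (by simp [hx, hy]))

theorem mem_closure_one_pair {τ z : ℂ} :
    z ∈ AddSubgroup.closure {1, τ} ↔ ∃ m n : ℤ, (m : ℂ) + n * τ = z := by
  simp [AddSubgroup.mem_closure_pair, zsmul_eq_mul]

theorem exists_int_eq_of_ofReal_mem_closure_one_pair {τ : ℂ} (hτ : τ.im ≠ 0) {r : ℝ}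
    (hr : (r : ℂ) ∈ AddSubgroup.closure {1, τ}) : ∃ p : ℤ, r = p := by
  obtain ⟨m, n, h⟩ := mem_closure_one_pair.mp hr
  have hn : (n : ℝ) * τ.im = 0 := by simpa using congrArg im h
  have hn : n = 0 := by exact_mod_cast (mul_eq_zero.mp hn).resolve_right hτ
  exact ⟨m, by simpa [hn] using (congrArg re h).symm⟩

theorem exists_rat_re_of_two_re_mem_closure_one_pair {τ z : ℂ}
    (hz : z ∈ AddSubgroup.closure {1, τ}) (hz_im : z.im ≠ 0)
    (hz_re : ((2 * z.re : ℝ) : ℂ) ∈ AddSubgroup.closure {1, τ}) : ∃ q : ℚ, τ.re = q := by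
  obtain ⟨m, n, rfl⟩ := mem_closure_one_pair.mp hz
  have hτ : τ.im ≠ 0 := by rintro h; simp [h] at hz_im
  have hn : (n : ℝ) ≠ 0 := by rintro h; simp [h] at hz_im
  obtain ⟨p, hp⟩ := exists_int_eq_of_ofReal_mem_closure_one_pair hτ hz_re
  refine ⟨(p - 2 * m) / (2 * n), ?_⟩
  simp only [add_re, intCast_re, mul_re, intCast_im, zero_mul, sub_zero] at hp
  push_cast
  field_simp
  linarith

end Complex

open Complex

/-- For `τ` with `Im τ ≠ 0` and `Λ_τ = ℤ + ℤτ`, the real part of `τ` is rational if and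
only if there is an additive subgroup `Λ ⊆ Λ_τ` stable under complex conjugation and
containing two elements linearly independent over ℝ. -/
theorem re_rational_iff_conj_stable_sublattice (τ : ℂ) (hτ : τ.im ≠ 0) :
    (∃ q : ℚ, τ.re = (q : ℝ)) ↔
    ∃ Λ : AddSubgroup ℂ,
      (Λ : Set ℂ) ⊆ (AddSubgroup.closure {1, τ} : AddSubgroup ℂ) ∧
      (starRingEnd ℂ) '' (Λ : Set ℂ) = (Λ : Set ℂ) ∧
      ∃ x y : ℂ, x ∈ Λ ∧ y ∈ Λ ∧ LinearIndependent ℝ ![x, y] := by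
  set L := AddSubgroup.closure {1, τ}
  constructor
  · rintro ⟨q, hq⟩
    have hden : (q.den : ℝ) * τ.re = q.num := by rw [hq, Rat.cast_def]; field_simp
    set y : ℂ := q.den * τ - q.num
    have hy : y ∈ L := mem_closure_one_pair.mpr ⟨-q.num, q.den, by simp [y]; ring⟩
    have hy_conj : conj y = -y := Complex.ext (by simp [y, hden]) (by simp)
    have hy_im : y.im ≠ 0 := by simp [y, hτ, q.den_nz]
    have hden_mem : (q.den : ℂ) ∈ L := mem_closure_one_pair.mpr ⟨q.den, 0, by simp⟩
    refine ⟨L ⊓ L.comap (conj : ℂ →+* ℂ).toAddMonoidHom, inf_le_left,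
      Set.image_inter_preimage_self_of_involutive conj_conj _, q.den, y,
      ⟨hden_mem, by simpa using hden_mem⟩, ⟨hy, by simpa [hy_conj] using L.neg_mem hy⟩,
      linearIndependent_pair_of_im_eq_zero_of_im_ne_zero (by simp) (by simp) hy_im⟩
  · rintro ⟨Λ, hΛL, hconj, x, y, hx, hy, hxy⟩
    obtain ⟨z, hz, hz_im⟩ : ∃ z ∈ Λ, z.im ≠ 0 := by
      by_contra! h
      exact not_linearIndependent_pair_of_im_eq_zero (h x hx) (h y hy) hxy
    have hz_conj : conj z ∈ Λ := by rw [← SetLike.mem_coe, ← hconj]; exact ⟨z, hz, rfl⟩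
    exact exists_rat_re_of_two_re_mem_closure_one_pair (hΛL hz) hz_im
      (add_conj z ▸ hΛL (Λ.add_mem hz hz_conj))
end
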